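/- Let σ = exp(ad(t^{n-1})) with n ≥ 2. Then σ(D(R, k[Xₙ])) = D(R, Uₙ), where k[Xₙ] = k + tⁿk[t] and Uₙ = k(1 - t^{n-1}) + tⁿk[t]. -/

import Mathlib

/-!
Write `w = t^{n-1}` and work modulo `tⁿ`, where `w² ≡ 0`. Then `ad(w)^m d` sends `h` to
`d(w^m h) - m w d(w^{m-1} h)`, so if `ad(w)^N d = 0` (every element of `A₁` is
`ad(w)`-locally nilpotent) the exponential series gives `σ(d) h ≡ (1 - w) Σ_{m<N} d(w^m h)/m!`;
the top term `d(w^N h)` drops out because it is `≡ N w d(w^{N-1} h)`, which has no constant term.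
Hence `d(R) ⊆ k g + tⁿk[t]` with `g(0) = 1` forces `σ(d)(R) ⊆ k (1 - w) g + tⁿk[t]`. With `g = 1`
this is `σ(D(R, k[Xₙ])) ⊆ D(R, Uₙ)`. Conversely `σ⁻¹ = exp(ad(-w))` on locally nilpotent
elements, and `g = 1 - w` with `w` replaced by `-w` gives `(1 + w)(1 - w) ≡ 1`, so
`σ⁻¹(D(R, Uₙ)) ⊆ D(R, k[Xₙ])`.
-/

open Polynomial

/-- Multiplication by `t` as a `k`-linear endomorphism of `k[t]`. -/
noncomputable def Tmul (k : Type) [Field k] : Module.End k (Polynomial k) :=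
  Algebra.lmul k (Polynomial k) X

/-- The derivative `∂ = d/dt` as a `k`-linear endomorphism of `k[t]`. -/
noncomputable def Dop (k : Type) [Field k] : Module.End k (Polynomial k) :=
  Polynomial.derivative

/-- The first Weyl algebra `A₁ = k⟨t,∂⟩`, realized as the subalgebra of
`End_k(k[t])` generated by multiplication by `t` and the derivative. -/
noncomputable def WeylA (k : Type) [Field k] : Subalgebra k (Module.End k (Polynomial k)) :=
  Algebra.adjoin k {Tmul k, Dop k}

/-- `ad(p) : d ↦ [d,p] = dp - pd`, as a `k`-linear endomorphism of `End_k(k[t])`. -/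
noncomputable def adOp {k : Type} [Field k] (p : Module.End k (Polynomial k)) :
    Module.End k (Module.End k (Polynomial k)) :=
  LinearMap.mulRight k p - LinearMap.mulLeft k p

open Finset

noncomputable def expTrunc {k V : Type*} [Field k] [AddCommGroup V] [Module k V] (N : ℕ)
    (δ : Module.End k V) : Module.End k V :=
  ∑ m ∈ range N, (m.factorial : k)⁻¹ • δ ^ m

theorem X_pow_dvd_trunc_mul_trunc_sub_one {R : Type*} [CommRing R] {φ ψ : PowerSeries R}
    (h : φ * ψ = 1) (N : ℕ) :
    (X : R[X]) ^ N ∣ PowerSeries.trunc N φ * PowerSeries.trunc N ψ - 1 := by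
  refine X_pow_dvd_iff.2 fun d hd => ?_
  have := congrArg (coeff · d) (PowerSeries.trunc_trunc_mul_trunc φ ψ (n := N))
  simp only [PowerSeries.coeff_trunc, if_pos hd, ← Polynomial.coe_mul, Polynomial.coeff_coe,
    h] at this
  simp [this, coeff_one]

section TruncatedExp

variable {k V : Type*} [Field k] [CharZero k] [AddCommGroup V] [Module k V]

theorem expTrunc_smul_eq_aeval (c : k) (δ : Module.End k V) (N : ℕ) :
    expTrunc N (c • δ) =
      aeval δ (PowerSeries.trunc N (PowerSeries.rescale c (PowerSeries.exp k))) := by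
  rw [aeval_def, PowerSeries.eval₂_trunc_eq_sum_range, expTrunc]
  refine sum_congr rfl fun m _ => ?_
  rw [PowerSeries.coeff_rescale, PowerSeries.coeff_exp, _root_.smul_pow, smul_smul,
    ← Algebra.smul_def]
  simp [mul_comm]

theorem expTrunc_neg_apply_expTrunc_apply (δ : Module.End k V) {N : ℕ} {x : V}
    (hx : (δ ^ N) x = 0) : expTrunc N (-δ) (expTrunc N δ x) = x := by
  obtain ⟨q, hq⟩ := X_pow_dvd_trunc_mul_trunc_sub_one
    (φ := PowerSeries.rescale (-1) (PowerSeries.exp k)) (ψ := PowerSeries.exp k)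
    ((mul_comm _ _).trans (PowerSeries.exp_mul_exp_neg_eq_one (A := k))) N
  have hexp : expTrunc N δ = aeval δ (PowerSeries.trunc N (PowerSeries.exp k)) := by
    simpa using expTrunc_smul_eq_aeval 1 δ N
  have hexp_neg : expTrunc N (-δ) =
      aeval δ (PowerSeries.trunc N (PowerSeries.rescale (-1) (PowerSeries.exp k))) := by
    simpa using expTrunc_smul_eq_aeval (-1) δ N
  rw [hexp, hexp_neg, ← Module.End.mul_apply, ← map_mul, sub_eq_iff_eq_add.1 hq, mul_comm,
    map_add, map_mul, map_pow, aeval_X, map_one, LinearMap.add_apply, Module.End.mul_apply, hx,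
    map_zero, zero_add, Module.End.one_apply]

end TruncatedExp

section LocallyNilpotent

variable {k : Type} [Field k]

theorem adOp_apply (p d : Module.End k k[X]) : adOp p d = d * p - p * d := rfl

theorem adOp_neg (p : Module.End k k[X]) : adOp (-p) = -adOp p := by
  refine LinearMap.ext fun d => LinearMap.ext fun h => ?_
  simp only [adOp_apply, LinearMap.sub_apply, LinearMap.neg_apply, Module.End.mul_apply,
    _root_.map_neg]
  abel

theorem adOp_mul (p x y : Module.End k k[X]) :
    adOp p (x * y) = adOp p x * y + x * adOp p y := by
  simp only [adOp_apply, mul_sub, sub_mul, mul_assoc]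
  abel

theorem adOp_pow_mul (p x y : Module.End k k[X]) (m : ℕ) :
    (adOp p ^ m) (x * y) =
      ∑ ij ∈ antidiagonal m, m.choose ij.1 • ((adOp p ^ ij.1) x * (adOp p ^ ij.2) y) := by
  induction m with
  | zero => simp
  | succ m ih =>
    rw [sum_antidiagonal_choose_succ_nsmul (fun i j => (adOp p ^ i) x * (adOp p ^ j) y) m]
    simp only [pow_succ', Module.End.mul_apply, ih, map_sum, map_nsmul, adOp_mul, nsmul_add,
      sum_add_distrib]
    rw [add_comm]
    congr 1
    refine sum_congr rfl fun ⟨i, j⟩ hij => ?_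
    rw [Nat.choose_symm_of_eq_add (HasAntidiagonal.mem_antidiagonal.1 hij).symm]

theorem adOp_pow_add_apply_mul_eq_zero {p x y : Module.End k k[X]} {a b : ℕ}
    (hx : (adOp p ^ a) x = 0) (hy : (adOp p ^ b) y = 0) : (adOp p ^ (a + b)) (x * y) = 0 := by
  rw [adOp_pow_mul]
  refine sum_eq_zero fun ⟨i, j⟩ hij => ?_
  rcases le_or_gt a i with hi | hi
  · rw [Module.End.pow_map_zero_of_le hi hx, zero_mul, smul_zero]
  · have hj : b ≤ j := by rw [HasAntidiagonal.mem_antidiagonal] at hij; omega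
    rw [Module.End.pow_map_zero_of_le hj hy, mul_zero, smul_zero]

def adLocallyNilpotent (p : Module.End k k[X]) : Subalgebra k (Module.End k k[X]) where
  carrier := {x | ∃ N, (adOp p ^ N) x = 0}
  mul_mem' := fun ⟨a, hx⟩ ⟨b, hy⟩ => ⟨a + b, adOp_pow_add_apply_mul_eq_zero hx hy⟩
  add_mem' := fun {x y} ⟨a, hx⟩ ⟨b, hy⟩ => ⟨a + b, by
    rw [map_add, Module.End.pow_map_zero_of_le (Nat.le_add_right a b) hx,
      Module.End.pow_map_zero_of_le (Nat.le_add_left b a) hy, add_zero]⟩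
  algebraMap_mem' := fun c => ⟨1, by rw [pow_one, adOp_apply, Algebra.commutes, sub_self]⟩

theorem adOp_lmul_lmul (a b : k[X]) :
    adOp (Algebra.lmul k k[X] a) (Algebra.lmul k k[X] b) = 0 := by
  rw [adOp_apply, ← map_mul, ← map_mul, mul_comm, sub_self]

theorem adOp_lmul_Dop (a : k[X]) :
    adOp (Algebra.lmul k k[X] a) (Dop k) = Algebra.lmul k k[X] (derivative a) := by
  refine LinearMap.ext fun h => ?_
  simp [adOp_apply, Dop, derivative_mul]

theorem weylA_le_adLocallyNilpotent (a : k[X]) :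
    WeylA k ≤ adLocallyNilpotent (Algebra.lmul k k[X] a) := by
  refine Algebra.adjoin_le (Set.insert_subset_iff.2 ⟨⟨1, ?_⟩, Set.singleton_subset_iff.2 ⟨2, ?_⟩⟩)
  · rw [pow_one, Tmul, adOp_lmul_lmul]
  · rw [pow_two, Module.End.mul_apply, adOp_lmul_Dop, adOp_lmul_lmul]

end LocallyNilpotent

theorem pow_dvd_sq_pow_pred {M : Type*} [Monoid M] (x : M) {n : ℕ} (hn : 2 ≤ n) :
    x ^ n ∣ (x ^ (n - 1)) ^ 2 := by
  rw [← pow_mul]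
  exact pow_dvd_pow x (by omega)

def IsExpOf {k : Type} [Field k] (σ : WeylA k ≃ₐ[k] WeylA k)
    (δ : Module.End k (Module.End k k[X])) : Prop :=
  ∀ (d : WeylA k) (N : ℕ), (δ ^ N) d = 0 → (σ d : Module.End k k[X]) = expTrunc N δ d

section ModXPow

variable {k : Type} [Field k] (n : ℕ)

local notation "π" => Ideal.Quotient.mkₐ k (Ideal.span {(X : k[X]) ^ n})

theorem exists_eq_C_mul_add_X_pow_mul_iff {a g : k[X]} :
    (∃ c : k, ∃ q : k[X], a = C c * g + X ^ n * q) ↔ π a ∈ k ∙ π g := by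
  rw [Submodule.mem_span_singleton]
  refine exists_congr fun c => ?_
  rw [← map_smul, smul_eq_C_mul, eq_comm, Ideal.Quotient.mkₐ_eq_mk, Ideal.Quotient.eq,
    Ideal.mem_span_singleton, dvd_def]
  simp only [sub_eq_iff_eq_add']

theorem exists_eq_C_add_X_pow_mul_iff {a : k[X]} :
    (∃ c : k, ∃ q : k[X], a = C c + X ^ n * q) ↔ π a ∈ k ∙ 1 := by
  simpa using exists_eq_C_mul_add_X_pow_mul_iff n (g := 1)

variable {n}

theorem eq_zero_of_smul_mk_eq_mk_mul (hn : n ≠ 0) {g w : k[X]} (hg : g.coeff 0 = 1) (hw : X ∣ w)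
    {c : k} {y : k[X] ⧸ Ideal.span {(X : k[X]) ^ n}} (h : c • π g = π w * y) : c = 0 := by
  obtain ⟨r, rfl⟩ := Ideal.Quotient.mkₐ_surjective k _ y
  rw [← map_smul, ← map_mul, Ideal.Quotient.mkₐ_eq_mk, Ideal.Quotient.eq,
    Ideal.mem_span_singleton] at h
  have h0 := X_dvd_iff.1 ((dvd_pow_self X hn).trans h)
  simpa [hg, X_dvd_iff.1 hw, mul_coeff_zero, coeff_smul] using h0

theorem mk_mul_self_eq_zero {w : k[X]} (hw : X ^ n ∣ w ^ 2) : π w * π w = 0 := by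
  rw [← map_mul, ← sq, Ideal.Quotient.mkₐ_eq_mk, Ideal.Quotient.eq_zero_iff_mem,
    Ideal.mem_span_singleton]
  exact hw

theorem mk_adOp_lmul_pow_succ_apply {w : k[X]} (hw : X ^ n ∣ w ^ 2) (d : Module.End k k[X])
    (m : ℕ) (h : k[X]) :
    π ((adOp (Algebra.lmul k k[X] w) ^ (m + 1)) d h) =
      π (d (w ^ (m + 1) * h)) - (m + 1) • (π w * π (d (w ^ m * h))) := by
  induction m generalizing d with
  | zero => simp [adOp_apply]
  | succ m ih =>
    rw [pow_succ, Module.End.mul_apply, ih]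
    simp only [adOp_apply, LinearMap.sub_apply, Module.End.mul_apply, Algebra.coe_lmul_eq_mul,
      LinearMap.mul_apply', ← mul_assoc, ← pow_succ', map_sub, map_mul]
    linear_combination (m + 1) • (π (d (w ^ m * h))) * mk_mul_self_eq_zero hw

theorem mk_apply_pow_mul_eq_zero (hn : n ≠ 0) {w g : k[X]} (hXw : X ∣ w) (hw : X ^ n ∣ w ^ 2)
    (hg : g.coeff 0 = 1) {d : Module.End k k[X]} {N : ℕ}
    (hN : (adOp (Algebra.lmul k k[X] w) ^ N) d = 0) (hd : ∀ h, π (d h) ∈ k ∙ π g) (h : k[X]) :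
    π (d (w ^ N * h)) = 0 := by
  obtain ⟨c, hc⟩ := Submodule.mem_span_singleton.1 (hd (w ^ N * h))
  rcases N with _ | N
  · simp [show d = 0 by simpa using hN]
  · have := mk_adOp_lmul_pow_succ_apply hw d N h
    rw [hN, LinearMap.zero_apply, map_zero, eq_comm, sub_eq_zero, ← mul_smul_comm] at this
    rw [← hc, eq_zero_of_smul_mk_eq_mk_mul hn hg hXw (hc.trans this), zero_smul]

variable [CharZero k]

theorem mk_expTrunc_succ_adOp_lmul_apply {w : k[X]} (hw : X ^ n ∣ w ^ 2) (d : Module.End k k[X])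
    {N : ℕ} (h : k[X]) (htop : π (d (w ^ N * h)) = 0) :
    π (expTrunc (N + 1) (adOp (Algebra.lmul k k[X] w)) d h) =
      (1 - π w) * ∑ m ∈ range N, (m.factorial : k)⁻¹ • π (d (w ^ m * h)) := by
  set a : ℕ → k[X] ⧸ Ideal.span {(X : k[X]) ^ n} :=
    fun m => (m.factorial : k)⁻¹ • π (d (w ^ m * h))
  have hterm (m : ℕ) :
      ((m + 1).factorial : k)⁻¹ • π ((adOp (Algebra.lmul k k[X] w) ^ (m + 1)) d h) =
        a (m + 1) - π w * a m := by
    have hfact : ((m + 1).factorial : k)⁻¹ * (m + 1 : ℕ) = (m.factorial : k)⁻¹ := by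
      rw [Nat.factorial_succ, Nat.cast_mul, mul_inv, mul_right_comm,
        inv_mul_cancel₀ (Nat.cast_ne_zero.2 m.succ_ne_zero), one_mul]
    rw [mk_adOp_lmul_pow_succ_apply hw, smul_sub, ← Nat.cast_smul_eq_nsmul k, smul_smul, hfact,
      mul_smul_comm]
  have hzero : ((0 : ℕ).factorial : k)⁻¹ • π ((adOp (Algebra.lmul k k[X] w) ^ 0) d h) = a 0 := by
    simp [a]
  have hshift : ∑ m ∈ range N, a (m + 1) + a 0 = ∑ m ∈ range N, a m := by
    rw [← sum_range_succ', sum_range_succ, show a N = 0 by simp only [a, htop, smul_zero], add_zero]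
  rw [expTrunc, LinearMap.sum_apply, LinearMap.sum_apply, map_sum, sum_range_succ']
  simp only [LinearMap.smul_apply, map_smul, hterm, sum_sub_distrib, ← mul_sum, hzero]
  linear_combination hshift

theorem mk_expTrunc_adOp_lmul_apply_mem (hn : n ≠ 0) {w g : k[X]} (hXw : X ∣ w)
    (hw : X ^ n ∣ w ^ 2) (hg : g.coeff 0 = 1) {d : Module.End k k[X]} {N : ℕ}
    (hN : (adOp (Algebra.lmul k k[X] w) ^ N) d = 0) (hd : ∀ h, π (d h) ∈ k ∙ π g) (h : k[X]) :
    π (expTrunc (N + 1) (adOp (Algebra.lmul k k[X] w)) d h) ∈ k ∙ π ((1 - w) * g) := by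
  rw [mk_expTrunc_succ_adOp_lmul_apply hw d h
    (mk_apply_pow_mul_eq_zero hn hXw hw hg hN hd h)]
  obtain ⟨c, hc⟩ := Submodule.mem_span_singleton.1
    (Submodule.sum_mem _ fun m _ => Submodule.smul_mem _ _ (hd (w ^ m * h)))
  exact Submodule.mem_span_singleton.2 ⟨c, by rw [← hc, mul_smul_comm, map_mul, map_sub, map_one]⟩

theorem mk_apply_mem_of_isExpOf (hn : 2 ≤ n) {σ : WeylA k ≃ₐ[k] WeylA k}
    (hσ : IsExpOf σ (adOp (Algebra.lmul k k[X] (X ^ (n - 1))))) {d : WeylA k}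
    (hd : ∀ h, π ((d : Module.End k k[X]) h) ∈ k ∙ 1) (h : k[X]) :
    π ((σ d : Module.End k k[X]) h) ∈ k ∙ π (1 - X ^ (n - 1)) := by
  obtain ⟨N, hN⟩ := weylA_le_adLocallyNilpotent _ d.2
  rw [hσ d (N + 1) (Module.End.pow_map_zero_of_le N.le_succ hN)]
  simpa using mk_expTrunc_adOp_lmul_apply_mem (by omega) (dvd_pow_self X (by omega))
    (pow_dvd_sq_pow_pred (X : k[X]) hn) coeff_one_zero hN (by simpa using hd) h

theorem mk_symm_apply_mem_of_isExpOf (hn : 2 ≤ n) {σ : WeylA k ≃ₐ[k] WeylA k}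
    (hσ : IsExpOf σ (adOp (Algebra.lmul k k[X] (X ^ (n - 1))))) {e : WeylA k}
    (he : ∀ h, π ((e : Module.End k k[X]) h) ∈ k ∙ π (1 - X ^ (n - 1))) (h : k[X]) :
    π ((σ.symm e : Module.End k k[X]) h) ∈ k ∙ 1 := by
  obtain ⟨N₁, hN₁⟩ := weylA_le_adLocallyNilpotent (X ^ (n - 1)) (σ.symm e).2
  obtain ⟨N₂, hN₂⟩ := weylA_le_adLocallyNilpotent (-X ^ (n - 1)) e.2
  have hN₁' := Module.End.pow_map_zero_of_le (by omega : N₁ ≤ N₁ + N₂ + 1) hN₁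
  have hinv : ((σ.symm e : WeylA k) : Module.End k k[X]) =
      expTrunc (N₁ + N₂ + 1) (adOp (Algebra.lmul k k[X] (-X ^ (n - 1)))) e := by
    rw [map_neg, adOp_neg, ← expTrunc_neg_apply_expTrunc_apply _ hN₁', ← hσ _ _ hN₁',
      σ.apply_symm_apply]
  rw [hinv]
  convert mk_expTrunc_adOp_lmul_apply_mem (by omega) (dvd_neg.2 (dvd_pow_self X (by omega)))
    (by rw [neg_sq]; exact pow_dvd_sq_pow_pred (X : k[X]) hn) (by simp [coeff_X_pow]; omega)
    (Module.End.pow_map_zero_of_le (N₂.le_add_left N₁) hN₂) he h using 3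
  simp only [map_mul, map_sub, map_neg, map_one]
  linear_combination mk_mul_self_eq_zero (pow_dvd_sq_pow_pred (X : k[X]) hn)

end ModXPow

/-- For `n ≥ 2` and `σ = exp(ad(t^{n-1}))`, one has
`σ(D(R, k[Xₙ])) = D(R, Uₙ)`, where `k[Xₙ] = k + tⁿk[t]` and
`Uₙ = k(1 - t^{n-1}) + tⁿk[t]`. -/
theorem stmt16 {k : Type} [Field k] [CharZero k] (n : ℕ) (hn : 2 ≤ n)
    (p : Module.End k (Polynomial k)) (hp : p = Tmul k ^ (n - 1))
    (σ : WeylA k ≃ₐ[k] WeylA k)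
    (hσ : ∀ (d : WeylA k) (N : ℕ),
        (adOp p ^ N) (d : Module.End k (Polynomial k)) = 0 →
        (σ d : Module.End k (Polynomial k)) =
          ∑ m ∈ Finset.range N,
            ((m.factorial : k)⁻¹ • (adOp p ^ m) (d : Module.End k (Polynomial k)))) :
    σ '' {d : WeylA k | ∀ h : Polynomial k, (d : Module.End k (Polynomial k)) h
            ∈ {a : Polynomial k | ∃ c : k, ∃ q : Polynomial k, a = C c + X ^ n * q}}
      = {d : WeylA k | ∀ h : Polynomial k, (d : Module.End k (Polynomial k)) h
            ∈ {a : Polynomial k | ∃ c : k, ∃ q : Polynomial k,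
                a = C c * (1 - X ^ (n - 1)) + X ^ n * q}} := by
  rw [hp, Tmul, ← map_pow] at hσ
  have hσ_exp : IsExpOf σ (adOp (Algebra.lmul k k[X] (X ^ (n - 1)))) := fun d N hN => by
    simp only [hσ d N hN, expTrunc, LinearMap.sum_apply, LinearMap.smul_apply]
  ext e
  simp only [Set.mem_image, Set.mem_ofPred_eq, exists_eq_C_add_X_pow_mul_iff,
    exists_eq_C_mul_add_X_pow_mul_iff]
  constructor
  · rintro ⟨d, hd, rfl⟩
    exact mk_apply_mem_of_isExpOf hn hσ_exp hd
  · exact fun he => ⟨σ.symm e, mk_symm_apply_mem_of_isExpOf hn hσ_exp he, σ.apply_symm_apply e⟩
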